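/- In the Gibbs–Poisson allocation model, the number P_{n,k} of nonempty boxes satisfies P(P_{n,k} = p) = ({n}_p / σ_k(nθ)) · B_{k,p}(σ_•(θ)) for p = 1,...,min(n,k), where {n}_p = n!/(n-p)! and B_{k,p}(σ_•(θ)) = (k!/p!) Σ_{k_1+...+k_p=k, k_q≥1} ∏_q σ_{k_q}(θ)/k_q!. -/

import Mathlib

open Finset

/-- The local exponential generating function `φ(x) = Σ_{m≥1} (φ_m/m!) x^m`
as a formal power series. -/
noncomputable def phiPS (φ : ℕ → ℝ) : PowerSeries ℝ :=
  PowerSeries.mk fun m => if m = 0 then 0 else φ m / m.factorial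

/-- `σ_k(θ) := k! [x^k] exp(θ φ(x))`, where the coefficient of the composed
exponential is computed termwise (φ has zero constant term, so only `l ≤ k`
contribute). -/
noncomputable def sigmaP (φ : ℕ → ℝ) (k : ℕ) (θ : ℝ) : ℝ :=
  (k.factorial : ℝ) *
    ∑ l ∈ Finset.range (k + 1),
      θ ^ l / l.factorial * PowerSeries.coeff k (phiPS φ ^ l)


/-- The Bell exponential polynomial `B_{k,l}(φ_•) = (k!/l!) [x^k] φ(x)^l`. -/
noncomputable def BellB (φ : ℕ → ℝ) (k l : ℕ) : ℝ :=
  ((k.factorial : ℝ) / l.factorial) * PowerSeries.coeff k (phiPS φ ^ l)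

/-- `B_{k,p}(σ_•(θ)) = (k!/p!) Σ_{k_1+...+k_p=k, k_q ≥ 1} ∏_q σ_{k_q}(θ)/k_q!`. -/
noncomputable def BellSigma (φ : ℕ → ℝ) (θ : ℝ) (k p : ℕ) : ℝ :=
  ((k.factorial : ℝ) / p.factorial) *
    ∑ kv ∈ (Finset.Nat.antidiagonalTuple p k).filter (fun kv => ∀ q, 0 < kv q),
      ∏ q, sigmaP φ (kv q) θ / ((kv q).factorial : ℝ)

/-!
Write `c_j = σ_j(θ) / j! = [x^j] exp (θ φ(x))`, so that `P (ξ_i = j) = c_j x^j / Z`. Each tuple of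
total `k` then has probability `x^k / Z^n · ∏ c_{k_i}`, and this common factor cancels in the
conditional probability. Summing over all tuples gives `[x^k] exp (θ φ)^n = [x^k] exp (n θ φ)`,
i.e. `σ_k(n θ) / k!`. Summing over the tuples whose positive support is a fixed `p`-set `S` gives,
after extending by zero, the sum over compositions of `k` into `p` positive parts, i.e.
`p! / k! · B_{k,p}(σ_•(θ))`; there are `n choose p` such sets.
-/

namespace PowerSeries

lemma coeff_pow_nonneg {R : Type*} [CommSemiring R] [PartialOrder R] [IsOrderedRing R]
    {f : PowerSeries R} (hf : ∀ m, 0 ≤ coeff m f) (l k : ℕ) : 0 ≤ coeff k (f ^ l) := by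
  rw [coeff_pow]
  exact sum_nonneg fun _ _ => prod_nonneg fun _ _ => hf _

lemma coeff_pow_eq_zero_of_constantCoeff_eq_zero {R : Type*} [CommSemiring R] {f : PowerSeries R}
    (hf : constantCoeff f = 0) {k l : ℕ} (h : k < l) : coeff k (f ^ l) = 0 :=
  X_pow_dvd_iff.mp (pow_dvd_pow_of_dvd (X_dvd_iff.mpr hf) l) k h

end PowerSeries

open PowerSeries

section ExpPhi

variable (φ : ℕ → ℝ)

lemma constantCoeff_phiPS : constantCoeff (phiPS φ) = 0 := by
  simp [phiPS]

lemma coeff_phiPS_pow_nonneg (hφ : ∀ m, 0 ≤ φ m) (l k : ℕ) : 0 ≤ coeff k (phiPS φ ^ l) :=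
  coeff_pow_nonneg (fun m => by
    rw [phiPS, coeff_mk]; split_ifs
    exacts [le_rfl, div_nonneg (hφ m) (Nat.cast_nonneg _)]) l k

/-- `exp (θ φ(x))`, as the substitution of `φ` into `exp (θ X)`. -/
noncomputable def expPhi (θ : ℝ) : PowerSeries ℝ :=
  (rescale θ (exp ℝ)).subst (phiPS φ)

lemma coeff_expPhi (θ : ℝ) (k : ℕ) : coeff k (expPhi φ θ) =
    ∑ l ∈ range (k + 1), θ ^ l / l.factorial * coeff k (phiPS φ ^ l) := by
  rw [expPhi, coeff_subst' (HasSubst.of_constantCoeff_zero' (constantCoeff_phiPS φ)),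
    finsum_eq_sum_of_support_subset _ (s := range (k + 1))]
  · refine sum_congr rfl fun l _ => ?_
    simp [coeff_rescale, coeff_exp, div_eq_mul_inv]
  · intro l hl
    rw [Function.mem_support] at hl
    rw [coe_range, Set.mem_Iio, Nat.lt_succ_iff]
    by_contra! hkl
    exact hl (by rw [coeff_pow_eq_zero_of_constantCoeff_eq_zero (constantCoeff_phiPS φ) hkl,
      smul_zero])

lemma sigmaP_eq_factorial_mul_coeff_expPhi (k : ℕ) (θ : ℝ) :
    sigmaP φ k θ = k.factorial * coeff k (expPhi φ θ) := by
  rw [sigmaP, coeff_expPhi]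

lemma expPhi_add (θ₁ θ₂ : ℝ) : expPhi φ (θ₁ + θ₂) = expPhi φ θ₁ * expPhi φ θ₂ := by
  rw [expPhi, expPhi, expPhi, ← exp_mul_exp_eq_exp_add,
    subst_mul (HasSubst.of_constantCoeff_zero' (constantCoeff_phiPS φ))]

lemma expPhi_zero : expPhi φ 0 = 1 := by
  rw [expPhi, rescale_zero_apply, constantCoeff_exp, map_one, ← coe_substAlgHom
    (HasSubst.of_constantCoeff_zero' (constantCoeff_phiPS φ)), map_one]

lemma expPhi_pow (θ : ℝ) (n : ℕ) : expPhi φ θ ^ n = expPhi φ (n * θ) := by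
  induction n with
  | zero => simp [expPhi_zero]
  | succ n ih =>
    rw [pow_succ, ih, ← expPhi_add]
    push_cast
    ring_nf

lemma coeff_zero_expPhi (θ : ℝ) : coeff 0 (expPhi φ θ) = 1 := by
  simp [coeff_expPhi]

lemma coeff_expPhi_nonneg (hφ : ∀ m, 0 ≤ φ m) {θ : ℝ} (hθ : 0 ≤ θ) (k : ℕ) :
    0 ≤ coeff k (expPhi φ θ) := by
  rw [coeff_expPhi]
  exact sum_nonneg fun l _ => by have := coeff_phiPS_pow_nonneg φ hφ l k; positivity

end ExpPhi

section Tuples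

variable {R : Type*} [CommSemiring R]

lemma sum_antidiagonalTuple_prod_coeff (f : PowerSeries R) (n k : ℕ) :
    ∑ kv ∈ Nat.antidiagonalTuple n k, ∏ i, coeff (kv i) f = coeff k (f ^ n) := by
  have hpow : f ^ n = ∏ _i : Fin n, f := by simp
  rw [hpow, coeff_prod, finsuppAntidiag, sum_map, ← piAntidiag_univ_fin_eq_antidiagonalTuple]
  exact (sum_attach _ (fun kv : Fin n → ℕ => ∏ i, coeff (kv i) f)).symm

def posSupport {ι : Type*} [Fintype ι] (kv : ι → ℕ) : Finset ι := univ.filter (0 < kv ·)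

@[simp]
lemma mem_posSupport {ι : Type*} [Fintype ι] {kv : ι → ℕ} {i : ι} :
    i ∈ posSupport kv ↔ 0 < kv i := by
  simp [posSupport]

lemma apply_eq_zero_of_notMem_posSupport {ι : Type*} [Fintype ι] {kv : ι → ℕ} {i : ι}
    (hi : i ∉ posSupport kv) : kv i = 0 := by
  simpa using hi

def posAntidiagonalTuple (p k : ℕ) : Finset (Fin p → ℕ) :=
  (Nat.antidiagonalTuple p k).filter (fun w => ∀ q, 0 < w q)

lemma mem_posAntidiagonalTuple {p k : ℕ} {w : Fin p → ℕ} :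
    w ∈ posAntidiagonalTuple p k ↔ ∑ q, w q = k ∧ ∀ q, 0 < w q := by
  rw [posAntidiagonalTuple, mem_filter, Nat.mem_antidiagonalTuple]

section ExtendByZero

variable {n p k : ℕ} {S : Finset (Fin n)} (hS : S.card = p)
include hS

lemma mem_range_orderEmbOfFin {i : Fin n} : i ∈ Set.range (S.orderEmbOfFin hS) ↔ i ∈ S := by
  rw [range_orderEmbOfFin, mem_coe]

lemma comp_orderEmbOfFin_mem_posAntidiagonalTuple {kv : Fin n → ℕ}
    (hkv : kv ∈ (Nat.antidiagonalTuple n k).filter (posSupport · = S)) :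
    kv ∘ S.orderEmbOfFin hS ∈ posAntidiagonalTuple p k := by
  rw [mem_filter, Nat.mem_antidiagonalTuple] at hkv
  obtain ⟨hsum, hsupp⟩ := hkv
  refine mem_posAntidiagonalTuple.mpr ⟨?_, fun q => ?_⟩
  · rw [← hsum]
    refine Fintype.sum_of_injective _ (S.orderEmbOfFin hS).injective _ _ (fun i hi => ?_)
      fun q => rfl
    rw [mem_range_orderEmbOfFin hS, ← hsupp] at hi
    exact apply_eq_zero_of_notMem_posSupport hi
  · have hq : S.orderEmbOfFin hS q ∈ posSupport kv := hsupp ▸ S.orderEmbOfFin_mem hS q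
    exact (mem_posSupport (kv := kv)).mp hq

lemma extend_orderEmbOfFin_mem_antidiagonalTuple_filter {w : Fin p → ℕ}
    (hw : w ∈ posAntidiagonalTuple p k) :
    Function.extend (S.orderEmbOfFin hS) w 0 ∈
      (Nat.antidiagonalTuple n k).filter (posSupport · = S) := by
  set e := S.orderEmbOfFin hS
  have he : Function.Injective e := e.injective
  rw [mem_posAntidiagonalTuple] at hw
  have hoff : ∀ i ∉ Set.range e, Function.extend e w 0 i = 0 := fun i hi =>
    Function.extend_apply' _ _ _ (by simpa using hi)
  rw [mem_filter, Nat.mem_antidiagonalTuple]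
  refine ⟨?_, ?_⟩
  · rw [← hw.1]
    exact (Fintype.sum_of_injective e he _ _ hoff fun q => (he.extend_apply w 0 q).symm).symm
  · ext i
    rw [mem_posSupport, ← mem_range_orderEmbOfFin hS]
    refine ⟨fun hi => ?_, ?_⟩
    · by_contra hi'
      exact hi.ne' (hoff i hi')
    · rintro ⟨q, rfl⟩
      rw [he.extend_apply]
      exact hw.2 q

/-- Extending by zero along `S.orderEmbOfFin` identifies the tuples with positive support `S`
with the compositions into `#S` parts. -/
lemma sum_prod_of_posSupport_eq (c : ℕ → R) (hc : c 0 = 1) :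
    ∑ kv ∈ (Nat.antidiagonalTuple n k).filter (posSupport · = S), ∏ i, c (kv i) =
      ∑ w ∈ posAntidiagonalTuple p k, ∏ q, c (w q) := by
  set e := S.orderEmbOfFin hS
  have he : Function.Injective e := e.injective
  have hzero : ∀ kv ∈ (Nat.antidiagonalTuple n k).filter (posSupport · = S),
      ∀ i ∉ Set.range e, kv i = 0 := fun kv hkv i hi => by
    rw [mem_range_orderEmbOfFin hS, ← (mem_filter.mp hkv).2] at hi
    exact apply_eq_zero_of_notMem_posSupport hi
  refine sum_nbij' (fun kv => kv ∘ e) (fun w => Function.extend e w 0)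
    (fun kv => comp_orderEmbOfFin_mem_posAntidiagonalTuple hS)
    (fun w => extend_orderEmbOfFin_mem_antidiagonalTuple_filter hS) (fun kv hkv => ?_)
    (fun w _ => Function.extend_comp he w 0) (fun kv hkv => ?_)
  · funext i
    by_cases hi : i ∈ Set.range e
    · obtain ⟨q, rfl⟩ := hi
      exact he.extend_apply _ _ q
    · rw [Function.extend_apply' _ _ _ (by simpa using hi), hzero kv hkv i hi]
      rfl
  · refine (Fintype.prod_of_injective e he _ _ (fun i hi => ?_) fun q => rfl).symm
    rw [hzero kv hkv i hi, hc]

end ExtendByZero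

lemma sum_prod_of_card_posSupport_eq (n p k : ℕ) (c : ℕ → R) (hc : c 0 = 1) :
    ∑ kv ∈ (Nat.antidiagonalTuple n k).filter (fun kv => (posSupport kv).card = p),
        ∏ i, c (kv i) =
      n.choose p * ∑ w ∈ posAntidiagonalTuple p k, ∏ q, c (w q) := by
  rw [← sum_fiberwise_of_maps_to (g := posSupport) (t := powersetCard p univ)
    fun kv hkv => mem_powersetCard.mpr ⟨subset_univ _, (mem_filter.mp hkv).2⟩]
  have hfiber : ∀ S ∈ powersetCard p (univ : Finset (Fin n)),
      ∑ kv ∈ ((Nat.antidiagonalTuple n k).filter (fun kv => (posSupport kv).card = p)).filter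
          (posSupport · = S), ∏ i, c (kv i) =
        ∑ w ∈ posAntidiagonalTuple p k, ∏ q, c (w q) := by
    intro S hS
    rw [mem_powersetCard] at hS
    rw [filter_filter, ← sum_prod_of_posSupport_eq hS.2 c hc]
    exact sum_congr (filter_congr fun kv _ => ⟨fun h => h.2, fun h => ⟨h ▸ hS.2, h⟩⟩)
      fun _ _ => rfl
  rw [sum_congr rfl hfiber, sum_const, card_powersetCard, card_univ, Fintype.card_fin,
    nsmul_eq_mul]

end Tuples

lemma BellSigma_eq_sum_posAntidiagonalTuple (φ : ℕ → ℝ) (θ : ℝ) (k p : ℕ) :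
    BellSigma φ θ k p = k.factorial / p.factorial *
      ∑ w ∈ posAntidiagonalTuple p k, ∏ q, coeff (w q) (expPhi φ θ) := by
  rw [BellSigma, posAntidiagonalTuple]
  congr 1
  refine sum_congr rfl fun w _ => prod_congr rfl fun q _ => ?_
  rw [sigmaP_eq_factorial_mul_coeff_expPhi]
  field_simp

open MeasureTheory ProbabilityTheory

section Independence

variable {Ω : Type*} [MeasurableSpace Ω] {P : Measure Ω}

lemma measure_tuple_mem_finset {ι α : Type*} [Fintype ι] [MeasurableSpace α]
    [MeasurableSingletonClass α] {ξ : ι → Ω → α} (hmeas : ∀ i, Measurable (ξ i))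
    (hindep : iIndepFun ξ P) (T : Finset (ι → α)) :
    P {ω | (ξ · ω) ∈ T} = ∑ kv ∈ T, ∏ i, P (ξ i ⁻¹' {kv i}) := by
  have hfiber : ∀ kv : ι → α, (fun ω i => ξ i ω) ⁻¹' {kv} = ⋂ i, ξ i ⁻¹' {kv i} := fun kv => by
    ext ω
    simp [funext_iff]
  rw [show {ω | (ξ · ω) ∈ T} = (fun ω i => ξ i ω) ⁻¹' ↑T from rfl,
    ← sum_measure_preimage_singleton]
  · refine sum_congr rfl fun kv _ => ?_
    rw [hfiber, hindep.meas_iInter fun i => ⟨{kv i}, measurableSet_singleton _, rfl⟩]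
  · intro kv _
    rw [hfiber]
    exact MeasurableSet.iInter fun i => hmeas i (measurableSet_singleton _)

section ProductLaw

variable {n : ℕ} {ξ : Fin n → Ω → ℕ} (hmeas : ∀ i, Measurable (ξ i)) (hindep : iIndepFun ξ P)
  {f : PowerSeries ℝ} (hf : ∀ j, 0 ≤ coeff j f) {x Z : ℝ} (hx : 0 ≤ x) (hZ : 0 ≤ Z)
  (hlaw : ∀ i j, P (ξ i ⁻¹' {j}) = ENNReal.ofReal (coeff j f * x ^ j / Z))
include hmeas hindep hf hx hZ hlaw

lemma measure_tuple_mem_of_subset_antidiagonalTuple {k : ℕ} {T : Finset (Fin n → ℕ)}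
    (hT : T ⊆ Nat.antidiagonalTuple n k) :
    P {ω | (ξ · ω) ∈ T} = ENNReal.ofReal (x ^ k / Z ^ n * ∑ kv ∈ T, ∏ i, coeff (kv i) f) := by
  have hterm : ∀ kv ∈ T, ∏ i, P (ξ i ⁻¹' {kv i}) =
      ENNReal.ofReal (x ^ k / Z ^ n * ∏ i, coeff (kv i) f) := fun kv hkv => by
    simp_rw [hlaw]
    rw [← ENNReal.ofReal_prod_of_nonneg fun i _ => by have := hf (kv i); positivity]
    congr 1
    simp_rw [div_eq_mul_inv, prod_mul_distrib, prod_pow_eq_pow_sum,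
      (Nat.mem_antidiagonalTuple.mp (hT hkv)), prod_const, card_univ, Fintype.card_fin, inv_pow]
    ring
  rw [measure_tuple_mem_finset hmeas hindep, sum_congr rfl hterm,
    ← ENNReal.ofReal_sum_of_nonneg fun kv _ => ?_, mul_sum]
  have := prod_nonneg fun i (_ : i ∈ univ) => hf (kv i)
  positivity

lemma measure_sum_eq (k : ℕ) :
    P {ω | ∑ i, ξ i ω = k} = ENNReal.ofReal (x ^ k / Z ^ n * coeff k (f ^ n)) := by
  rw [← sum_antidiagonalTuple_prod_coeff, ← measure_tuple_mem_of_subset_antidiagonalTuple hmeas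
    hindep hf hx hZ hlaw subset_rfl]
  congr 1
  ext ω
  simp [Nat.mem_antidiagonalTuple]

lemma measure_sum_eq_inter_card_posSupport_eq (hf0 : coeff 0 f = 1) (k p : ℕ) :
    P ({ω | ∑ i, ξ i ω = k} ∩ {ω | (posSupport (ξ · ω)).card = p}) =
      ENNReal.ofReal (x ^ k / Z ^ n *
        (n.choose p * ∑ w ∈ posAntidiagonalTuple p k, ∏ q, coeff (w q) f)) := by
  rw [← sum_prod_of_card_posSupport_eq n p k (coeff · f) hf0,
    ← measure_tuple_mem_of_subset_antidiagonalTuple hmeas hindep hf hx hZ hlaw (filter_subset _ _)]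
  congr 1
  ext ω
  rw [Set.mem_ofPred_eq, mem_filter, Nat.mem_antidiagonalTuple]
  rfl

end ProductLaw

end Independence

theorem stmt7_general {Ω : Type*} [MeasurableSpace Ω] (P : Measure Ω)
    (φ : ℕ → ℝ) (hφ : ∀ m, 0 ≤ φ m)
    (θ x Zθ : ℝ) (hθ : 0 < θ) (hx : 0 < x) (hZ : 0 < Zθ)
    (n : ℕ) (ξ : Fin n → Ω → ℕ)
    (hmeas : ∀ i, Measurable (ξ i))
    (hindep : iIndepFun ξ P)
    (hlaw : ∀ i j, P {ω | ξ i ω = j} =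
      ENNReal.ofReal (sigmaP φ j θ * x ^ j / (Zθ * j.factorial)))
    (k p : ℕ) :
    ProbabilityTheory.cond P {ω | ∑ i, ξ i ω = k}
        {ω | (Finset.univ.filter fun i => 0 < ξ i ω).card = p} =
      ENNReal.ofReal ((n.descFactorial p : ℝ) / sigmaP φ k (n * θ) *
        BellSigma φ θ k p) := by
  change cond P _ {ω | (posSupport (ξ · ω)).card = p} = _
  have hlaw' : ∀ i j, P (ξ i ⁻¹' {j}) =
      ENNReal.ofReal (coeff j (expPhi φ θ) * x ^ j / Zθ) := fun i j => by
    rw [show ξ i ⁻¹' {j} = {ω | ξ i ω = j} from rfl, hlaw, sigmaP_eq_factorial_mul_coeff_expPhi]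
    congr 1
    field_simp
  have hc := coeff_expPhi_nonneg φ hφ hθ.le
  have hPA := measure_sum_eq hmeas hindep hc hx.le hZ.le hlaw' k
  have hPAB := measure_sum_eq_inter_card_posSupport_eq hmeas hindep hc hx.le hZ.le hlaw'
    (coeff_zero_expPhi φ θ) k p
  rw [expPhi_pow] at hPA
  rw [sigmaP_eq_factorial_mul_coeff_expPhi]
  -- If `σ_k(n θ) = 0` the conditioning event is null: `cond` is then `0`, as is `_ / 0` in `ℝ`.
  rcases (coeff_expPhi_nonneg φ hφ (by positivity : 0 ≤ (n : ℝ) * θ) k).eq_or_lt with hσ | hσ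
  · rw [cond_eq_zero_of_meas_eq_zero (by simp [hPA, ← hσ]), ← hσ]
    simp
  rw [cond_apply (measurableSet_eq_fun (by fun_prop) measurable_const), hPA, hPAB,
    ← ENNReal.div_eq_inv_mul, ← ENNReal.ofReal_div_of_pos (by positivity),
    BellSigma_eq_sum_posAntidiagonalTuple, Nat.descFactorial_eq_factorial_mul_choose]
  congr 1
  push_cast
  field_simp

theorem stmt7 {Ω : Type*} [MeasurableSpace Ω] (P : Measure Ω) [IsProbabilityMeasure P]
    (φ : ℕ → ℝ) (hφ1 : 0 < φ 1) (hφ : ∀ m, 0 ≤ φ m)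
    (θ x Zθ : ℝ) (hθ : 0 < θ) (hx : 0 < x) (hZ : 0 < Zθ)
    (n : ℕ) (ξ : Fin n → Ω → ℕ)
    (hmeas : ∀ i, Measurable (ξ i))
    (hindep : iIndepFun ξ P)
    (hlaw : ∀ i j, P {ω | ξ i ω = j} =
      ENNReal.ofReal (sigmaP φ j θ * x ^ j / (Zθ * j.factorial)))
    (k p : ℕ) (hp : 1 ≤ p) (hpn : p ≤ n) (hpk : p ≤ k) :
    ProbabilityTheory.cond P {ω | ∑ i, ξ i ω = k}
        {ω | (Finset.univ.filter fun i => 0 < ξ i ω).card = p} =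
      ENNReal.ofReal ((n.descFactorial p : ℝ) / sigmaP φ k (n * θ) *
        BellSigma φ θ k p) :=
  stmt7_general P φ hφ θ x Zθ hθ hx hZ n ξ hmeas hindep hlaw k p
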